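/- arXiv:2006.14789 — 2 statements merged into one kernel-verified Lean document; each statement's English description precedes it below -/
import Mathlib

section
/- Let W : ℝ → ℝ be differentiable with |W'(y)| ≤ (1 + y²)^{-1/3} for all y ∈ ℝ. Then for every λ > 0 the rescaled function f_λ(x) = λ^{1/2} W(λ^{-3/2} x) satisfies the uniform Hölder-1/3 bound |f_λ(x) - f_λ(x')| ≤ 6 |x - x'|^{1/3} for all x, x' ∈ ℝ, with constant independent of λ. -/
/-!
Since `(1 + y²)^{-1/3} ≤ |y|^{-2/3}`, on each half-line `|W'|` is dominated by the derivative of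
`3 |y|^{1/3}`, so `|W t - W s| ≤ 3 |t - s|^{1/3}` whenever `s, t` lie on the same side of `0`;
splitting an interval that contains `0` at `0` costs a factor `2`. The resulting bound
`|W a - W b| ≤ 6 |a - b|^{1/3}` is invariant under `W ↦ μ^{1/3} W(· / μ)`, and
`f_λ` is this rescaling with `μ = λ^{3/2}`.
-/

open Real Set

lemma abs_sub_le_sub_of_abs_hasDerivAt_le {f g f' g' : ℝ → ℝ} {s t : ℝ} (hst : s ≤ t)
    (hf : ContinuousOn f (Icc s t)) (hg : ContinuousOn g (Icc s t))
    (hf' : ∀ y ∈ Ioo s t, HasDerivAt f (f' y) y) (hg' : ∀ y ∈ Ioo s t, HasDerivAt g (g' y) y)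
    (hbound : ∀ y ∈ Ioo s t, |f' y| ≤ g' y) :
    |f t - f s| ≤ g t - g s := by
  have hs : s ∈ Icc s t := left_mem_Icc.2 hst
  have ht : t ∈ Icc s t := right_mem_Icc.2 hst
  have hsub : MonotoneOn (g - f) (Icc s t) := by
    refine monotoneOn_of_hasDerivWithinAt_nonneg (convex_Icc s t) (hg.sub hf) (f' := g' - f')
      (fun y hy => ?_) (fun y hy => ?_) <;> rw [interior_Icc] at hy
    · exact ((hg' y hy).sub (hf' y hy)).hasDerivWithinAt
    · linarith [show (g' - f') y = g' y - f' y from rfl, le_abs_self (f' y), hbound y hy]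
  have hadd : MonotoneOn (g + f) (Icc s t) := by
    refine monotoneOn_of_hasDerivWithinAt_nonneg (convex_Icc s t) (hg.add hf) (f' := g' + f')
      (fun y hy => ?_) (fun y hy => ?_) <;> rw [interior_Icc] at hy
    · exact ((hg' y hy).add (hf' y hy)).hasDerivWithinAt
    · linarith [show (g' + f') y = g' y + f' y from rfl, neg_abs_le (f' y), hbound y hy]
  have h₁ := hsub hs ht hst
  have h₂ := hadd hs ht hst
  simp only [Pi.sub_apply, Pi.add_apply] at h₁ h₂
  exact abs_sub_le_iff.2 ⟨by linarith, by linarith⟩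

lemma rpow_sub_rpow_le_rpow_sub {p s t : ℝ} (hp : 0 ≤ p) (hp1 : p ≤ 1) (hs : 0 ≤ s)
    (hst : s ≤ t) : t ^ p - s ^ p ≤ (t - s) ^ p := by
  have := rpow_add_le_add_rpow hs (sub_nonneg.2 hst) hp hp1
  rw [add_sub_cancel] at this
  linarith

lemma abs_sub_le_rpow_of_abs_deriv_le_of_nonneg {W : ℝ → ℝ} (hW : Differentiable ℝ W) {p : ℝ}
    (hp : 0 < p) (hp1 : p ≤ 1) (hW' : ∀ y, 0 < y → |deriv W y| ≤ y ^ (p - 1)) {s t : ℝ}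
    (hs : 0 ≤ s) (hst : s ≤ t) : |W t - W s| ≤ (t - s) ^ p / p := by
  have hG : ∀ y ∈ Ioo s t, HasDerivAt (fun y => y ^ p / p) (y ^ (p - 1)) y := fun y hy => by
    have := (hasDerivAt_rpow_const (p := p) (Or.inl (hs.trans_lt hy.1).ne')).div_const p
    rwa [mul_div_cancel_left₀ _ hp.ne'] at this
  calc |W t - W s| ≤ t ^ p / p - s ^ p / p :=
        abs_sub_le_sub_of_abs_hasDerivAt_le hst hW.continuous.continuousOn
          ((continuous_rpow_const hp.le).div_const p).continuousOn
          (fun y _ => (hW y).hasDerivAt) hG (fun y hy => hW' y (hs.trans_lt hy.1))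
    _ = (t ^ p - s ^ p) / p := by ring
    _ ≤ (t - s) ^ p / p := by gcongr; exact rpow_sub_rpow_le_rpow_sub hp.le hp1 hs hst

lemma abs_sub_le_rpow_of_abs_deriv_le {W : ℝ → ℝ} (hW : Differentiable ℝ W) {p : ℝ}
    (hp : 0 < p) (hp1 : p ≤ 1) (hW' : ∀ y ≠ 0, |deriv W y| ≤ |y| ^ (p - 1)) {s t : ℝ}
    (hst : s ≤ t) (hsign : 0 ≤ s ∨ t ≤ 0) : |W t - W s| ≤ (t - s) ^ p / p := by
  rcases hsign with hs | ht
  · refine abs_sub_le_rpow_of_abs_deriv_le_of_nonneg hW hp hp1 (fun y hy => ?_) hs hst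
    simpa [abs_of_pos hy] using hW' y hy.ne'
  · have hneg : ∀ y, 0 < y → |deriv (fun y => W (-y)) y| ≤ y ^ (p - 1) := fun y hy => by
      simpa [deriv_comp_neg, abs_of_pos hy] using hW' (-y) (neg_ne_zero.2 hy.ne')
    have := abs_sub_le_rpow_of_abs_deriv_le_of_nonneg (hW.comp differentiable_neg) hp hp1 hneg
      (neg_nonneg.2 ht) (neg_le_neg hst)
    simp only [Function.comp_apply, neg_neg, neg_sub_neg] at this
    rwa [abs_sub_comm]

lemma abs_sub_le_two_div_mul_rpow_of_abs_deriv_le {W : ℝ → ℝ} (hW : Differentiable ℝ W) {p : ℝ}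
    (hp : 0 < p) (hp1 : p ≤ 1) (hW' : ∀ y ≠ 0, |deriv W y| ≤ |y| ^ (p - 1)) (a b : ℝ) :
    |W a - W b| ≤ 2 / p * |a - b| ^ p := by
  wlog hba : b ≤ a generalizing a b
  · rw [abs_sub_comm, abs_sub_comm a]
    exact this b a (le_of_not_ge hba)
  -- `c` is `0` clamped to `[b, a]`, so neither `[b, c]` nor `[c, a]` contains `0` in its interior.
  set c := max b (min a 0)
  have hbc : b ≤ c := le_max_left _ _
  have hca : c ≤ a := max_le hba (min_le_left _ _)
  have hleft : |W c - W b| ≤ (c - b) ^ p / p :=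
    abs_sub_le_rpow_of_abs_deriv_le hW hp hp1 hW' hbc (by
      rcases le_total 0 b with hb | hb
      · exact Or.inl hb
      · exact Or.inr (max_le hb (min_le_right _ _)))
  have hright : |W a - W c| ≤ (a - c) ^ p / p :=
    abs_sub_le_rpow_of_abs_deriv_le hW hp hp1 hW' hca (by
      rcases le_total 0 a with ha | ha
      · exact Or.inl (le_max_of_le_right (le_min ha le_rfl))
      · exact Or.inr ha)
  have hmono : ∀ d, 0 ≤ d → d ≤ a - b → d ^ p / p ≤ |a - b| ^ p / p := fun d hd hdab => by
    gcongr
    exact hdab.trans (le_abs_self _)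
  calc |W a - W b| ≤ |W a - W c| + |W c - W b| := abs_sub_le _ _ _
    _ ≤ |a - b| ^ p / p + |a - b| ^ p / p := by
        gcongr
        · exact hright.trans (hmono _ (sub_nonneg.2 hca) (by linarith))
        · exact hleft.trans (hmono _ (sub_nonneg.2 hbc) (by linarith))
    _ = 2 / p * |a - b| ^ p := by ring

lemma abs_rpow_mul_comp_div_sub_le {W : ℝ → ℝ} {C p μ : ℝ} (hμ : 0 < μ)
    (hW : ∀ a b, |W a - W b| ≤ C * |a - b| ^ p) (x x' : ℝ) :
    |μ ^ p * W (x / μ) - μ ^ p * W (x' / μ)| ≤ C * |x - x'| ^ p := by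
  have hμp : 0 < μ ^ p := rpow_pos_of_pos hμ p
  calc |μ ^ p * W (x / μ) - μ ^ p * W (x' / μ)| = μ ^ p * |W (x / μ) - W (x' / μ)| := by
        rw [← mul_sub, abs_mul, abs_of_pos hμp]
    _ ≤ μ ^ p * (C * |x / μ - x' / μ| ^ p) := by gcongr; exact hW _ _
    _ = C * |x - x'| ^ p := by
        rw [← sub_div, abs_div, abs_of_pos hμ, div_rpow (abs_nonneg _) hμ.le]
        field_simp

lemma one_add_sq_rpow_le_abs_rpow {q : ℝ} (hq : q ≤ 0) {y : ℝ} (hy : y ≠ 0) :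
    (1 + y ^ 2) ^ q ≤ |y| ^ (2 * q) := by
  calc (1 + y ^ 2) ^ q ≤ (y ^ 2) ^ q := rpow_le_rpow_of_nonpos (by positivity) (by linarith) hq
    _ = |y| ^ (2 * q) := by
        rw [← sq_abs, ← rpow_natCast, ← rpow_mul (abs_nonneg y)]
        norm_num

/-- Uniform Hölder-1/3 bound: if `|W'(y)| ≤ (1+y²)^{-1/3}`, then for every `λ > 0` the
rescaling `f_λ(x) = λ^{1/2} W(λ^{-3/2}x)` satisfies `|f_λ(x) - f_λ(x')| ≤ 6|x-x'|^{1/3}`. -/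
theorem selfsimilar_holder_bound (W : ℝ → ℝ) (hW : Differentiable ℝ W)
    (hW' : ∀ y : ℝ, |deriv W y| ≤ (1 + y ^ 2) ^ (-(1 : ℝ) / 3)) :
    ∀ lam : ℝ, 0 < lam → ∀ x x' : ℝ,
      |lam ^ ((1 : ℝ) / 2) * W (x / lam ^ ((3 : ℝ) / 2))
          - lam ^ ((1 : ℝ) / 2) * W (x' / lam ^ ((3 : ℝ) / 2))|
        ≤ 6 * |x - x'| ^ ((1 : ℝ) / 3) := by
  intro lam hlam x x'
  have hdecay : ∀ y ≠ 0, |deriv W y| ≤ |y| ^ ((1 : ℝ) / 3 - 1) := fun y hy => by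
    have := one_add_sq_rpow_le_abs_rpow (q := -(1 : ℝ) / 3) (by norm_num) hy
    rw [show 2 * (-(1 : ℝ) / 3) = 1 / 3 - 1 by norm_num] at this
    exact (hW' y).trans this
  have hholder : ∀ a b, |W a - W b| ≤ 6 * |a - b| ^ ((1 : ℝ) / 3) := fun a b => by
    convert abs_sub_le_two_div_mul_rpow_of_abs_deriv_le hW (by norm_num) (by norm_num) hdecay a b
      using 2
    norm_num
  have hscale : lam ^ ((1 : ℝ) / 2) = (lam ^ ((3 : ℝ) / 2)) ^ ((1 : ℝ) / 3) := by
    rw [← rpow_mul hlam.le]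
    norm_num
  rw [hscale]
  exact abs_rpow_mul_comp_div_sub_le (by positivity) hholder x x'
end

section
/- Let s₀ ≥ 0, a ≥ 0, and let Φ : [s₀, ∞) → ℝ be a measurable function with |Φ(s)| ≥ min(|e^{s/2} - a|, e^{s/2}) for all s ≥ s₀. Then for all real numbers σ₁, σ₂ with 0 ≤ σ₁ ≤ 1/2 and σ₂ > 2σ₁, the integral ∫_{s₀}^{∞} e^{σ₁ s} (1 + |Φ(s)|)^{-σ₂} ds is finite and bounded by a constant depending only on σ₁ and σ₂ (independent of s₀ and a). -/
open MeasureTheory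

/-!
Write `x = exp (s / 2) ≥ 1`. Where `min |x - a| x ≥ x / 2`, the integrand is at most
`2 ^ σ₂ * exp (-(σ₂ / 2 - σ₁) * s)`, integrable on `[0, ∞)` since `σ₂ > 2 σ₁`. Otherwise `x` is
comparable to `a`, so `s` is close to `2 log a`, and convexity of `exp` gives
`|x - a| ≥ (a / 4) |s - 2 log a|`. Since `σ₁ ≤ 1 / 2`, the factor `x ^ (2 σ₁) ≲ a ^ (2 σ₁)` can then
be traded for `a (1 + a |s - 2 log a|) ^ (2 σ₁ - 1)`, leaving the integrable profile
`(1 + |u|) ^ (-(1 + σ₂ - 2 σ₁))` rescaled by `a`, whose integral is independent of `a`.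
-/

open Real Set

theorem integrableOn_and_setIntegral_le_integral_of_le {α : Type*} [MeasurableSpace α]
    {μ : Measure α} {S : Set α} {F G : α → ℝ} (hS : MeasurableSet S)
    (hF : AEStronglyMeasurable F (μ.restrict S))
    (hF0 : ∀ x ∈ S, 0 ≤ F x) (hFG : ∀ x ∈ S, F x ≤ G x) (hG : Integrable G μ) (hG0 : 0 ≤ G) :
    IntegrableOn F S μ ∧ ∫ x in S, F x ∂μ ≤ ∫ x, G x ∂μ := by
  have hF_int : IntegrableOn F S μ := by
    refine hG.integrableOn.mono' hF ((ae_restrict_iff' hS).mpr (.of_forall fun x hx => ?_))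
    rw [norm_of_nonneg (hF0 x hx)]
    exact hFG x hx
  refine ⟨hF_int, ?_⟩
  calc ∫ x in S, F x ∂μ ≤ ∫ x in S, G x ∂μ := setIntegral_mono_on hF_int hG.integrableOn hS hFG
    _ ≤ ∫ x, G x ∂μ := setIntegral_le_integral hG (.of_forall hG0)

theorem integrable_mul_comp_mul_sub {g : ℝ → ℝ} (hg : Integrable g) (a t : ℝ) :
    Integrable (fun s => a * g (a * (s - t))) := by
  rcases eq_or_ne a 0 with rfl | ha
  · simp
  · exact ((hg.comp_mul_left' ha).comp_sub_right t).const_mul a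

theorem integral_mul_comp_mul_sub_le {g : ℝ → ℝ} (hg : 0 ≤ ∫ u, g u) {a : ℝ} (ha : 0 ≤ a)
    (t : ℝ) : ∫ s, a * g (a * (s - t)) ≤ ∫ u, g u := by
  rw [integral_const_mul, integral_sub_right_eq_self (fun s => g (a * s)),
    Measure.integral_comp_mul_left, smul_eq_mul, abs_of_nonneg (inv_nonneg.mpr ha), ← mul_assoc]
  exact mul_le_of_le_one_left hg mul_inv_le_one

theorem Real.min_exp_mul_abs_sub_le_abs_exp_sub_exp (u v : ℝ) :
    min (exp u) (exp v) * |u - v| ≤ |exp u - exp v| := by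
  wlog huv : u ≤ v generalizing u v
  · simpa only [min_comm, abs_sub_comm] using this v u (le_of_not_ge huv)
  have hexp : exp u * (v - u) ≤ exp v - exp u := by
    have := add_one_le_exp (v - u)
    rw [show exp v = exp u * exp (v - u) by rw [← exp_add]; ring_nf]
    nlinarith [exp_pos u]
  rw [min_eq_left (exp_le_exp.mpr huv), abs_sub_comm u, abs_of_nonneg (by linarith),
    abs_sub_comm, abs_of_nonneg (by nlinarith [exp_pos u])]
  exact hexp

section Weights

variable {σ₁ σ₂ : ℝ}

theorem rpow_mul_one_add_rpow_neg_le_of_half_le {x m : ℝ} (hσ₂ : 0 ≤ σ₂) (hx : 0 < x)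
    (hm : x / 2 ≤ m) : x ^ (2 * σ₁) * (1 + m) ^ (-σ₂) ≤ 2 ^ σ₂ * x ^ (2 * σ₁ - σ₂) := by
  have hm' : (1 + m) ^ (-σ₂) ≤ (x / 2) ^ (-σ₂) :=
    rpow_le_rpow_of_nonpos (by positivity) (by linarith) (by linarith)
  calc x ^ (2 * σ₁) * (1 + m) ^ (-σ₂) ≤ x ^ (2 * σ₁) * (x / 2) ^ (-σ₂) := by gcongr
    _ = 2 ^ σ₂ * x ^ (2 * σ₁ - σ₂) := by
      rw [div_rpow hx.le zero_le_two, rpow_neg zero_le_two, div_inv_eq_mul, sub_eq_add_neg,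
        rpow_add hx]
      ring

theorem rpow_mul_one_add_rpow_neg_le_of_le_four_mul {a x y m : ℝ} (h1 : 0 ≤ σ₁)
    (h2 : σ₁ ≤ 1 / 2) (hσ₂ : 0 ≤ σ₂) (ha : 1 / 2 ≤ a) (hx0 : 0 ≤ x) (hx : x ≤ 2 * a) (hy : 0 ≤ y)
    (hym : y ≤ 4 * m) (hma : m ≤ a) :
    x ^ (2 * σ₁) * (1 + m) ^ (-σ₂) ≤ 6 * 4 ^ σ₂ * (a * (1 + y) ^ (-(1 + σ₂ - 2 * σ₁))) := by
  have hy1 : 0 < 1 + y := by linarith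
  -- `6 * a` dominates both `x` and `1 + y`, and the two powers of it recombine to `6 * a`.
  have hx' : x ^ (2 * σ₁) ≤ (6 * a) ^ (2 * σ₁) := by gcongr; linarith
  have hy' : (1 + y) ^ (1 - 2 * σ₁) ≤ (6 * a) ^ (1 - 2 * σ₁) := by
    gcongr
    · linarith
    · linarith
  have hm' : (1 + m) ^ (-σ₂) ≤ 4 ^ σ₂ * (1 + y) ^ (-σ₂) := by
    calc (1 + m) ^ (-σ₂) ≤ ((1 + y) / 4) ^ (-σ₂) :=
          rpow_le_rpow_of_nonpos (by positivity) (by linarith) (by linarith)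
      _ = 4 ^ σ₂ * (1 + y) ^ (-σ₂) := by
        rw [div_rpow hy1.le (by norm_num), rpow_neg (by norm_num : (0 : ℝ) ≤ 4),
          div_inv_eq_mul, mul_comm]
  have hsplit : (1 + y) ^ (-σ₂) = (1 + y) ^ (1 - 2 * σ₁) * (1 + y) ^ (-(1 + σ₂ - 2 * σ₁)) := by
    rw [← rpow_add hy1]; ring_nf
  have h6a : (6 * a) ^ (2 * σ₁) * (6 * a) ^ (1 - 2 * σ₁) = 6 * a := by
    rw [← rpow_add (by linarith)]; norm_num
  calc x ^ (2 * σ₁) * (1 + m) ^ (-σ₂)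
      ≤ (6 * a) ^ (2 * σ₁) *
          (4 ^ σ₂ * ((6 * a) ^ (1 - 2 * σ₁) * (1 + y) ^ (-(1 + σ₂ - 2 * σ₁)))) := by
        rw [hsplit] at hm'
        exact mul_le_mul hx' (hm'.trans (by gcongr)) (rpow_nonneg (by linarith) _)
          (rpow_nonneg (by linarith) _)
    _ = 6 * 4 ^ σ₂ * (a * (1 + y) ^ (-(1 + σ₂ - 2 * σ₁))) := by
        linear_combination (4 ^ σ₂ * (1 + y) ^ (-(1 + σ₂ - 2 * σ₁))) * h6a

theorem exp_rpow_mul_one_add_abs_sub_rpow_neg_le_of_near {a s : ℝ} (h1 : 0 ≤ σ₁)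
    (h2 : σ₁ ≤ 1 / 2) (hσ₂ : 0 ≤ σ₂) (hs : 0 ≤ s) (hnear : |exp (s / 2) - a| < exp (s / 2) / 2) :
    exp (s / 2) ^ (2 * σ₁) * (1 + |exp (s / 2) - a|) ^ (-σ₂) ≤
      6 * 4 ^ σ₂ * (a * (1 + |a * (s - 2 * log a)|) ^ (-(1 + σ₂ - 2 * σ₁))) := by
  set x := exp (s / 2)
  have hx1 : 1 ≤ x := one_le_exp (by linarith)
  obtain ⟨hxa, hax⟩ := abs_lt.mp hnear
  have ha : 0 < a := by linarith
  have hlog : exp (log a) = a := exp_log ha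
  have hdist : min x a * |s / 2 - log a| ≤ |x - a| := by
    simpa only [hlog] using min_exp_mul_abs_sub_le_abs_exp_sub_exp (s / 2) (log a)
  have hmin : a / 2 ≤ min x a := le_min (by linarith) (by linarith)
  have hy : |a * (s - 2 * log a)| ≤ 4 * |x - a| := by
    rw [abs_mul, abs_of_pos ha, show s - 2 * log a = 2 * (s / 2 - log a) by ring, abs_mul,
      abs_two]
    nlinarith [abs_nonneg (s / 2 - log a)]
  exact rpow_mul_one_add_rpow_neg_le_of_le_four_mul h1 h2 hσ₂ (by linarith) (by linarith)
    (by linarith) (abs_nonneg _) hy (by linarith)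

noncomputable def trajectoryMajorant (σ₁ σ₂ a s : ℝ) : ℝ :=
  (Ici 0).indicator (fun s => 2 ^ σ₂ * exp (-(σ₂ / 2 - σ₁) * s)) s +
    6 * 4 ^ σ₂ * (a * (1 + |a * (s - 2 * log a)|) ^ (-(1 + σ₂ - 2 * σ₁)))

theorem exp_mul_one_add_rpow_neg_le_trajectoryMajorant {a s p : ℝ} (h1 : 0 ≤ σ₁)
    (h2 : σ₁ ≤ 1 / 2) (hσ₂ : 0 ≤ σ₂) (ha : 0 ≤ a) (hs : 0 ≤ s)
    (hp : min |exp (s / 2) - a| (exp (s / 2)) ≤ p) :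
    exp (σ₁ * s) * (1 + p) ^ (-σ₂) ≤ trajectoryMajorant σ₁ σ₂ a s := by
  set x := exp (s / 2) with hx
  set m := min |x - a| x
  have hx0 : 0 < x := exp_pos _
  have hm0 : 0 ≤ m := le_min (abs_nonneg _) hx0.le
  have hbump : 0 ≤ 6 * 4 ^ σ₂ * (a * (1 + |a * (s - 2 * log a)|) ^ (-(1 + σ₂ - 2 * σ₁))) := by
    positivity
  have hexp : exp (σ₁ * s) = x ^ (2 * σ₁) := by rw [hx, ← exp_mul]; ring_nf
  calc exp (σ₁ * s) * (1 + p) ^ (-σ₂) ≤ x ^ (2 * σ₁) * (1 + m) ^ (-σ₂) := by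
        rw [hexp]
        exact mul_le_mul_of_nonneg_left
          (rpow_le_rpow_of_nonpos (by linarith) (by linarith) (by linarith)) (by positivity)
    _ ≤ trajectoryMajorant σ₁ σ₂ a s := by
      rw [trajectoryMajorant, indicator_of_mem (mem_Ici.mpr hs)]
      by_cases hfar : x / 2 ≤ m
      · have hdecay : x ^ (2 * σ₁ - σ₂) = exp (-(σ₂ / 2 - σ₁) * s) := by
          rw [hx, ← exp_mul]; ring_nf
        have := rpow_mul_one_add_rpow_neg_le_of_half_le (σ₁ := σ₁) hσ₂ hx0 hfar
        rw [hdecay] at this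
        linarith
      · have hnear : |x - a| < x / 2 := by
          simp only [m, not_le, min_lt_iff] at hfar
          exact hfar.resolve_right (by linarith)
        rw [show m = |x - a| from min_eq_left (by linarith)]
        have := exp_rpow_mul_one_add_abs_sub_rpow_neg_le_of_near h1 h2 hσ₂ hs hnear
        rw [← hx] at this
        linarith [show 0 ≤ 2 ^ σ₂ * exp (-(σ₂ / 2 - σ₁) * s) by positivity]

theorem trajectoryMajorant_nonneg (σ₁ σ₂ : ℝ) {a : ℝ} (ha : 0 ≤ a) :
    0 ≤ trajectoryMajorant σ₁ σ₂ a := fun s =>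
  add_nonneg (indicator_nonneg (fun s _ => by positivity) s) (by positivity)

theorem integrable_one_add_abs_rpow_neg {r : ℝ} (hr : 1 < r) :
    Integrable (fun u : ℝ => (1 + |u|) ^ (-r)) := by
  simpa only [norm_eq_abs] using
    integrable_one_add_norm (E := ℝ) (μ := volume) (by simpa using hr)

theorem integrable_indicator_Ici_mul_exp_neg_mul {b : ℝ} (hb : 0 < b) (c : ℝ) :
    Integrable ((Ici 0).indicator fun s => c * exp (-b * s)) :=
  ((integrableOn_Ici_iff_integrableOn_Ioi).mpr
    ((exp_neg_integrableOn_Ioi 0 hb).const_mul c)).integrable_indicator measurableSet_Ici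

theorem integrable_trajectoryMajorant (h3 : 2 * σ₁ < σ₂) (a : ℝ) :
    Integrable (trajectoryMajorant σ₁ σ₂ a) :=
  (integrable_indicator_Ici_mul_exp_neg_mul (by linarith) _).add
    ((integrable_mul_comp_mul_sub (integrable_one_add_abs_rpow_neg (by linarith)) a
      (2 * log a)).const_mul _)

theorem integral_trajectoryMajorant_le (h3 : 2 * σ₁ < σ₂) {a : ℝ} (ha : 0 ≤ a) :
    ∫ s, trajectoryMajorant σ₁ σ₂ a s ≤ (∫ s in Ici 0, 2 ^ σ₂ * exp (-(σ₂ / 2 - σ₁) * s)) +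
      6 * 4 ^ σ₂ * ∫ u, (1 + |u|) ^ (-(1 + σ₂ - 2 * σ₁)) := by
  have hbump := integrable_mul_comp_mul_sub (integrable_one_add_abs_rpow_neg
    (r := 1 + σ₂ - 2 * σ₁) (by linarith)) a (2 * log a)
  unfold trajectoryMajorant
  rw [integral_add (integrable_indicator_Ici_mul_exp_neg_mul (by linarith) _)
    (hbump.const_mul _), integral_indicator measurableSet_Ici, integral_const_mul (6 * 4 ^ σ₂)]
  have hg0 : 0 ≤ ∫ u : ℝ, (1 + |u|) ^ (-(1 + σ₂ - 2 * σ₁)) :=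
    integral_nonneg fun u => rpow_nonneg (by positivity) _
  exact add_le_add_right (mul_le_mul_of_nonneg_left (integral_mul_comp_mul_sub_le hg0 ha _)
    (by positivity)) _

end Weights

/-- Escaping-trajectory integrability: if `|Φ(s)| ≥ min(|e^{s/2} - a|, e^{s/2})` on `[s₀,∞)`
with `s₀, a ≥ 0`, then for `0 ≤ σ₁ ≤ 1/2` and `σ₂ > 2σ₁` the integral
`∫_{s₀}^∞ e^{σ₁ s}(1 + |Φ(s)|)^{-σ₂} ds` is finite, bounded by a constant depending only
on `σ₁, σ₂`. -/
theorem trajectory_weighted_integrability (σ₁ σ₂ : ℝ)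
    (h1 : 0 ≤ σ₁) (h2 : σ₁ ≤ 1 / 2) (h3 : 2 * σ₁ < σ₂) :
    ∃ C : ℝ, ∀ (s₀ a : ℝ) (Φ : ℝ → ℝ), 0 ≤ s₀ → 0 ≤ a → Measurable Φ →
      (∀ s, s₀ ≤ s → min |Real.exp (s / 2) - a| (Real.exp (s / 2)) ≤ |Φ s|) →
      IntegrableOn (fun s => Real.exp (σ₁ * s) * (1 + |Φ s|) ^ (-σ₂)) (Set.Ici s₀) ∧
      ∫ s in Set.Ici s₀, Real.exp (σ₁ * s) * (1 + |Φ s|) ^ (-σ₂) ≤ C := by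
  refine ⟨(∫ s in Ici 0, 2 ^ σ₂ * exp (-(σ₂ / 2 - σ₁) * s)) +
    6 * 4 ^ σ₂ * ∫ u, (1 + |u|) ^ (-(1 + σ₂ - 2 * σ₁)), ?_⟩
  intro s₀ a Φ hs₀ ha hΦ hΦ_ge
  obtain ⟨hint, hle⟩ := integrableOn_and_setIntegral_le_integral_of_le measurableSet_Ici
    (by fun_prop) (fun s _ => by positivity)
    (fun s hs => exp_mul_one_add_rpow_neg_le_trajectoryMajorant h1 h2 (by linarith) ha
      (hs₀.trans hs) (hΦ_ge s hs))
    (integrable_trajectoryMajorant h3 a) (trajectoryMajorant_nonneg σ₁ σ₂ ha)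
  exact ⟨hint, hle.trans (integral_trajectoryMajorant_le h3 ha)⟩
end
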